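/- Let K be the field of fractions of ℚ[x₀,x₁,x₂,x₃,x₄,x₅], set A = (x₂x₄+x₃x₅)/(x₀x₁), B = (x₁x₄+x₀x₅)/(x₂x₃), C = (x₀x₂+x₁x₃)/(x₄x₅), let τ'₁, τ'₂, τ'₃ be the maps on K⁶ defined by: τ'₁ replaces (v₀,v₁) by ((v₂v₄+v₃v₅)/v₁, (v₂v₄+v₃v₅)/v₀); τ'₂ replaces (v₂,v₃) by ((v₁v₄+v₀v₅)/v₃, (v₁v₄+v₀v₅)/v₂); τ'₃ replaces (v₄,v₅) by ((v₀v₂+v₁v₃)/v₅, (v₀v₂+v₁v₃)/v₄); each fixes the remaining entries. Let Φ = τ'₃∘τ'₂∘τ'₁ and X = (x₀,…,x₅). Then for every natural number m, Φ^{2m+1}(X) = (x₀A^{3m²+3m+1}B^{3m²+2m}C^{3m²+m}, x₁A^{3m²+3m+1}B^{3m²+2m}C^{3m²+m}, x₂A^{3m²+4m+1}B^{3m²+3m+1}C^{3m²+2m}, x₃A^{3m²+4m+1}B^{3m²+3m+1}C^{3m²+2m}, x₄A^{3m²+5m+2}B^{3m²+4m+1}C^{3m²+3m+1}, x₅A^{3m²+5m+2}B^{3m²+4m+1}C^{3m²+3m+1}).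 -/
import Mathlib


noncomputable section

/-- The polynomial ring ℚ[x₀,…,x₅]. -/
abbrev P : Type := MvPolynomial (Fin 6) ℚ

/-- K = Frac(ℚ[x₀,…,x₅]). -/
abbrev K : Type := FractionRing P

/-- The images of the variables x₀,…,x₅ in K. -/
def x (i : Fin 6) : K := algebraMap P K (MvPolynomial.X i)

/-- τ'₁ : replaces (v₀, v₁) by ((v₂v₄+v₃v₅)/v₁, (v₂v₄+v₃v₅)/v₀). -/
def tau1 (v : Fin 6 → K) : Fin 6 → K := fun k =>
  if k = 0 then (v 2 * v 4 + v 3 * v 5) / v 1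
  else if k = 1 then (v 2 * v 4 + v 3 * v 5) / v 0
  else v k

/-- τ'₂ : replaces (v₂, v₃) by ((v₁v₄+v₀v₅)/v₃, (v₁v₄+v₀v₅)/v₂). -/
def tau2 (v : Fin 6 → K) : Fin 6 → K := fun k =>
  if k = 2 then (v 1 * v 4 + v 0 * v 5) / v 3
  else if k = 3 then (v 1 * v 4 + v 0 * v 5) / v 2
  else v k

/-- τ'₃ : replaces (v₄, v₅) by ((v₀v₂+v₁v₃)/v₅, (v₀v₂+v₁v₃)/v₄). -/
def tau3 (v : Fin 6 → K) : Fin 6 → K := fun k =>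
  if k = 4 then (v 0 * v 2 + v 1 * v 3) / v 5
  else if k = 5 then (v 0 * v 2 + v 1 * v 3) / v 4
  else v k

/-- τ' indexed by Fin 3: `tau i` is τ'_{i+1}. -/
def tau : Fin 3 → (Fin 6 → K) → (Fin 6 → K)
  | 0 => tau1
  | 1 => tau2
  | 2 => tau3

/-- The initial labeled seed X = (x₀,…,x₅). -/
def X0 : Fin 6 → K := x

/-- Apply the maps τ'₍a₁₎, …, τ'₍aₙ₎ along the word `w` in left-to-right order. -/
def applyWord (w : List (Fin 3)) (v : Fin 6 → K) : Fin 6 → K :=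
  w.foldl (fun u a => tau a u) v

/-- A = (x₂x₄+x₃x₅)/(x₀x₁). -/
def A : K := (x 2 * x 4 + x 3 * x 5) / (x 0 * x 1)

/-- B = (x₁x₄+x₀x₅)/(x₂x₃). -/
def B : K := (x 1 * x 4 + x 0 * x 5) / (x 2 * x 3)

/-- C = (x₀x₂+x₁x₃)/(x₄x₅). -/
def C : K := (x 0 * x 2 + x 1 * x 3) / (x 4 * x 5)

/-- Φ = τ'₃ ∘ τ'₂ ∘ τ'₁, one application of the mutation sequence β = 123. -/
def Phi : (Fin 6 → K) → (Fin 6 → K) := fun v => tau3 (tau2 (tau1 v))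

lemma hx (i : Fin 6) : x i ≠ 0 := by
  rw [x, Ne, IsFractionRing.to_map_eq_zero_iff]
  exact MvPolynomial.X_ne_zero i

lemma vec5 (a b c d e f : K) : (![a,b,c,d,e,f] : Fin 6 → K) 5 = f := rfl

lemma num_ne_zero (i j k l : Fin 6) :
    x i * x j + x k * x l ≠ 0 := by
  rw [show x i * x j + x k * x l = algebraMap P K
      (MvPolynomial.X i * MvPolynomial.X j + MvPolynomial.X k * MvPolynomial.X l) by
        simp [x]]
  rw [Ne, IsFractionRing.to_map_eq_zero_iff]
  intro h
  have := congrArg (MvPolynomial.eval (fun _ => (1:ℚ))) h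
  simp at this

lemma hA0 : A ≠ 0 := div_ne_zero (num_ne_zero 2 4 3 5) (mul_ne_zero (hx 0) (hx 1))
lemma hB0 : B ≠ 0 := div_ne_zero (num_ne_zero 1 4 0 5) (mul_ne_zero (hx 2) (hx 3))
lemma hC0 : C ≠ 0 := div_ne_zero (num_ne_zero 0 2 1 3) (mul_ne_zero (hx 4) (hx 5))

lemma hA2 : x 2 * x 4 + x 3 * x 5 = A * (x 0 * x 1) := by
  rw [A, div_mul_cancel₀ _ (mul_ne_zero (hx 0) (hx 1))]
lemma hB2 : x 1 * x 4 + x 0 * x 5 = B * (x 2 * x 3) := by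
  rw [B, div_mul_cancel₀ _ (mul_ne_zero (hx 2) (hx 3))]
lemma hC2 : x 0 * x 2 + x 1 * x 3 = C * (x 4 * x 5) := by
  rw [C, div_mul_cancel₀ _ (mul_ne_zero (hx 4) (hx 5))]

lemma tau1_mono (M1 M2 M3 N1 : K) (h1 : M1 ≠ 0)
    (e1 : N1 * M1 = A * (M2 * M3)) :
    tau1 ![x 0 * M1, x 1 * M1, x 2 * M2, x 3 * M2, x 4 * M3, x 5 * M3] =
      ![x 0 * N1, x 1 * N1, x 2 * M2, x 3 * M2, x 4 * M3, x 5 * M3] := by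
  funext k
  fin_cases k <;> simp [tau1, vec5]
  · rw [div_eq_iff (mul_ne_zero (hx 1) h1)]
    linear_combination M2 * M3 * hA2 - x 0 * x 1 * e1
  · rw [div_eq_iff (mul_ne_zero (hx 0) h1)]
    linear_combination M2 * M3 * hA2 - x 1 * x 0 * e1

lemma tau2_mono (N1 M2 M3 N2 : K) (h2 : M2 ≠ 0)
    (e2 : N2 * M2 = B * (N1 * M3)) :
    tau2 ![x 0 * N1, x 1 * N1, x 2 * M2, x 3 * M2, x 4 * M3, x 5 * M3] =
      ![x 0 * N1, x 1 * N1, x 2 * N2, x 3 * N2, x 4 * M3, x 5 * M3] := by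
  funext k
  fin_cases k <;> simp [tau2, vec5]
  · rw [div_eq_iff (mul_ne_zero (hx 3) h2)]
    linear_combination N1 * M3 * hB2 - x 2 * x 3 * e2
  · rw [div_eq_iff (mul_ne_zero (hx 2) h2)]
    linear_combination N1 * M3 * hB2 - x 3 * x 2 * e2

lemma tau3_mono (N1 N2 M3 N3 : K) (h3 : M3 ≠ 0)
    (e3 : N3 * M3 = C * (N1 * N2)) :
    tau3 ![x 0 * N1, x 1 * N1, x 2 * N2, x 3 * N2, x 4 * M3, x 5 * M3] =
      ![x 0 * N1, x 1 * N1, x 2 * N2, x 3 * N2, x 4 * N3, x 5 * N3] := by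
  funext k
  fin_cases k <;> simp [tau3, vec5]
  · rw [div_eq_iff (mul_ne_zero (hx 5) h3)]
    linear_combination N1 * N2 * hC2 - x 4 * x 5 * e3
  · rw [div_eq_iff (mul_ne_zero (hx 4) h3)]
    linear_combination N1 * N2 * hC2 - x 5 * x 4 * e3

lemma Phi_mono (M1 M2 M3 N1 N2 N3 : K) (h1 : M1 ≠ 0) (h2 : M2 ≠ 0) (h3 : M3 ≠ 0)
    (e1 : N1 * M1 = A * (M2 * M3)) (e2 : N2 * M2 = B * (N1 * M3))
    (e3 : N3 * M3 = C * (N1 * N2)) :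
    Phi ![x 0 * M1, x 1 * M1, x 2 * M2, x 3 * M2, x 4 * M3, x 5 * M3] =
      ![x 0 * N1, x 1 * N1, x 2 * N2, x 3 * N2, x 4 * N3, x 5 * N3] := by
  rw [Phi, tau1_mono M1 M2 M3 N1 h1 e1, tau2_mono N1 M2 M3 N2 h2 e2,
    tau3_mono N1 N2 M3 N3 h3 e3]

lemma mono_ne (a b c : ℕ) : A ^ a * B ^ b * C ^ c ≠ 0 :=
  mul_ne_zero (mul_ne_zero (pow_ne_zero _ hA0) (pow_ne_zero _ hB0)) (pow_ne_zero _ hC0)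

lemma hv (u v w u2 v2 w2 u3 v3 w3 : K) :
    (![x 0 * u * v * w, x 1 * u * v * w, x 2 * u2 * v2 * w2, x 3 * u2 * v2 * w2,
      x 4 * u3 * v3 * w3, x 5 * u3 * v3 * w3] : Fin 6 → K)
    = ![x 0 * (u * v * w), x 1 * (u * v * w), x 2 * (u2 * v2 * w2), x 3 * (u2 * v2 * w2),
      x 4 * (u3 * v3 * w3), x 5 * (u3 * v3 * w3)] := by
  funext k
  fin_cases k <;> simp [vec5, mul_assoc]
/-- Proposition 2.5(b): β^n applied to the initial seed for n = 2m+1 odd. -/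
theorem beta_odd (m : ℕ) :
    Phi^[2 * m + 1] X0 =
      ![x 0 * A ^ (3 * m ^ 2 + 3 * m + 1) * B ^ (3 * m ^ 2 + 2 * m) * C ^ (3 * m ^ 2 + m),
        x 1 * A ^ (3 * m ^ 2 + 3 * m + 1) * B ^ (3 * m ^ 2 + 2 * m) * C ^ (3 * m ^ 2 + m),
        x 2 * A ^ (3 * m ^ 2 + 4 * m + 1) * B ^ (3 * m ^ 2 + 3 * m + 1) * C ^ (3 * m ^ 2 + 2 * m),
        x 3 * A ^ (3 * m ^ 2 + 4 * m + 1) * B ^ (3 * m ^ 2 + 3 * m + 1) * C ^ (3 * m ^ 2 + 2 * m),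
        x 4 * A ^ (3 * m ^ 2 + 5 * m + 2) * B ^ (3 * m ^ 2 + 4 * m + 1) * C ^ (3 * m ^ 2 + 3 * m + 1),
        x 5 * A ^ (3 * m ^ 2 + 5 * m + 2) * B ^ (3 * m ^ 2 + 4 * m + 1) * C ^ (3 * m ^ 2 + 3 * m + 1)] := by

  induction m with
  | zero =>
    have h0 : X0 = ![x 0 * (A^0*B^0*C^0), x 1 * (A^0*B^0*C^0), x 2 * (A^0*B^0*C^0),
        x 3 * (A^0*B^0*C^0), x 4 * (A^0*B^0*C^0), x 5 * (A^0*B^0*C^0)] := by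
      funext k
      fin_cases k <;> simp [X0, vec5]
    rw [show 2 * 0 + 1 = 1 by norm_num, Function.iterate_one, h0,
      Phi_mono _ _ _ (A^1*B^0*C^0) (A^1*B^1*C^0) (A^2*B^1*C^1)
        (mono_ne 0 0 0) (mono_ne 0 0 0) (mono_ne 0 0 0) (by ring) (by ring) (by ring),
      hv,
      show A^(3*0^2+3*0+1)*B^(3*0^2+2*0)*C^(3*0^2+0) = A^1*B^0*C^0 by norm_num,
      show A^(3*0^2+4*0+1)*B^(3*0^2+3*0+1)*C^(3*0^2+2*0) = A^1*B^1*C^0 by norm_num,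
      show A^(3*0^2+5*0+2)*B^(3*0^2+4*0+1)*C^(3*0^2+3*0+1) = A^2*B^1*C^1 by norm_num]
  | succ m ih =>
    rw [show 2 * (m+1) + 1 = (2 * m + 1) + 1 + 1 by ring,
      Function.iterate_succ_apply', Function.iterate_succ_apply', ih, hv,
      Phi_mono _ _ _
        (A^(3*m^2+6*m+3)*B^(3*m^2+5*m+2)*C^(3*m^2+4*m+1))
        (A^(3*m^2+7*m+4)*B^(3*m^2+6*m+3)*C^(3*m^2+5*m+2))
        (A^(3*m^2+8*m+5)*B^(3*m^2+7*m+4)*C^(3*m^2+6*m+3))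
        (mono_ne _ _ _) (mono_ne _ _ _) (mono_ne _ _ _) (by ring) (by ring) (by ring),
      Phi_mono _ _ _
        (A^(3*m^2+9*m+7)*B^(3*m^2+8*m+5)*C^(3*m^2+7*m+4))
        (A^(3*m^2+10*m+8)*B^(3*m^2+9*m+7)*C^(3*m^2+8*m+5))
        (A^(3*m^2+11*m+10)*B^(3*m^2+10*m+8)*C^(3*m^2+9*m+7))
        (mono_ne _ _ _) (mono_ne _ _ _) (mono_ne _ _ _) (by ring) (by ring) (by ring),
      hv,
      show A^(3*(m+1)^2+3*(m+1)+1)*B^(3*(m+1)^2+2*(m+1))*C^(3*(m+1)^2+(m+1))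
        = A^(3*m^2+9*m+7)*B^(3*m^2+8*m+5)*C^(3*m^2+7*m+4) by ring,
      show A^(3*(m+1)^2+4*(m+1)+1)*B^(3*(m+1)^2+3*(m+1)+1)*C^(3*(m+1)^2+2*(m+1))
        = A^(3*m^2+10*m+8)*B^(3*m^2+9*m+7)*C^(3*m^2+8*m+5) by ring,
      show A^(3*(m+1)^2+5*(m+1)+2)*B^(3*(m+1)^2+4*(m+1)+1)*C^(3*(m+1)^2+3*(m+1)+1)
        = A^(3*m^2+11*m+10)*B^(3*m^2+10*m+8)*C^(3*m^2+9*m+7) by ring]
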